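/- arXiv:2301.02705 — 3 statements merged into one kernel-verified Lean document; each statement's English description precedes it below -/
import Mathlib

section
/- Let X be a square-integrable random vector in R^d, F a sigma-algebra, and Y = E[X|F]. Then ‖E[XX^T] - E[YY^T]‖_F^2 ≤ ‖E[XX^T]‖_F^2 - ‖E[YY^T]‖_F^2. -/
/-!
With `A = E[XXᵀ]`, `B = E[YYᵀ]` and `Z = X - Y`, the pull-out property makes `Z` orthogonal to
every component of `Y`, so `E[ZZᵀ] = A - B`; in particular `A - B` is positive semidefinite.
Expanding, `‖A - B‖² = ‖A‖² - ‖B‖² - 2⟪A - B, B⟫`, and `⟪A - B, B⟫ = E[Yᵀ (A - B) Y] ≥ 0`.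
-/

open MeasureTheory Matrix

namespace MeasureTheory

variable {Ω ι : Type*} {mΩ : MeasurableSpace Ω} {μ : Measure Ω}

noncomputable def secondMomentMatrix (μ : Measure Ω) (W : Ω → ι → ℝ) : Matrix ι ι ℝ :=
  of fun i j => ∫ ω, W ω i * W ω j ∂μ

lemma secondMomentMatrix_apply (W : Ω → ι → ℝ) (i j : ι) :
    secondMomentMatrix μ W i j = ∫ ω, W ω i * W ω j ∂μ := rfl

lemma secondMomentMatrix_isHermitian (W : Ω → ι → ℝ) : (secondMomentMatrix μ W).IsHermitian := by
  ext i j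
  simp only [conjTranspose_apply, star_trivial, secondMomentMatrix_apply, mul_comm]

section Fintype

variable [Fintype ι] {W : Ω → ι → ℝ}

lemma integral_sum_sum_mul_eq (hW : ∀ i, MemLp (fun ω => W ω i) 2 μ) (c : ι → ι → ℝ) :
    ∫ ω, ∑ i, ∑ j, c i j * (W ω i * W ω j) ∂μ = ∑ i, ∑ j, c i j * secondMomentMatrix μ W i j := by
  have hint : ∀ i j, Integrable (fun ω => c i j * (W ω i * W ω j)) μ :=
    fun i j => ((hW i).integrable_mul (hW j)).const_mul _
  rw [integral_finsetSum _ fun i _ => integrable_finsetSum _ fun j _ => hint i j]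
  refine Finset.sum_congr rfl fun i _ => ?_
  rw [integral_finsetSum _ fun j _ => hint i j]
  exact Finset.sum_congr rfl fun j _ => integral_const_mul _ _

lemma secondMomentMatrix_posSemidef (hW : ∀ i, MemLp (fun ω => W ω i) 2 μ) :
    (secondMomentMatrix μ W).PosSemidef := by
  refine .of_dotProduct_mulVec_nonneg (secondMomentMatrix_isHermitian W) fun x => ?_
  have hsq : ∀ ω, (x ⬝ᵥ W ω) ^ 2 = ∑ i, ∑ j, x i * x j * (W ω i * W ω j) := fun ω => by
    simp only [dotProduct, sq, Finset.sum_mul_sum]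
    exact Finset.sum_congr rfl fun i _ => Finset.sum_congr rfl fun j _ => by ring
  calc 0 ≤ ∫ ω, (x ⬝ᵥ W ω) ^ 2 ∂μ := integral_nonneg fun ω => sq_nonneg _
    _ = star x ⬝ᵥ (secondMomentMatrix μ W *ᵥ x) := by
      simp only [hsq]
      rw [integral_sum_sum_mul_eq hW]
      simp only [star_trivial, dotProduct, mulVec, Finset.mul_sum]
      exact Finset.sum_congr rfl fun i _ => Finset.sum_congr rfl fun j _ => by ring

lemma trace_mul_transpose_secondMomentMatrix_nonneg {C : Matrix ι ι ℝ} (hC : C.PosSemidef)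
    (hW : ∀ i, MemLp (fun ω => W ω i) 2 μ) :
    0 ≤ (C * (secondMomentMatrix μ W)ᵀ).trace := by
  have hquad : ∀ ω, W ω ⬝ᵥ (C *ᵥ W ω) = ∑ i, ∑ j, C i j * (W ω i * W ω j) := fun ω => by
    simp only [dotProduct, mulVec, Finset.mul_sum]
    exact Finset.sum_congr rfl fun i _ => Finset.sum_congr rfl fun j _ => by ring
  calc 0 ≤ ∫ ω, W ω ⬝ᵥ (C *ᵥ W ω) ∂μ := integral_nonneg fun ω => hC.dotProduct_mulVec_nonneg _
    _ = (C * (secondMomentMatrix μ W)ᵀ).trace := by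
      simp only [hquad]
      rw [integral_sum_sum_mul_eq hW C]
      simp only [trace, diag_apply, mul_apply, transpose_apply, secondMomentMatrix_apply]

end Fintype

lemma integral_mul_condExp_of_stronglyMeasurable {m : MeasurableSpace Ω} (hm : m ≤ mΩ)
    [SigmaFinite (μ.trim hm)] {f g : Ω → ℝ} (hg : StronglyMeasurable[m] g)
    (hgf : Integrable (g * f) μ) (hf : Integrable f μ) :
    ∫ ω, g ω * μ[f|m] ω ∂μ = ∫ ω, g ω * f ω ∂μ :=
  calc ∫ ω, g ω * μ[f|m] ω ∂μ = ∫ ω, μ[g * f|m] ω ∂μ :=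
        integral_congr_ae (condExp_mul_of_stronglyMeasurable_left hg hgf hf).symm
    _ = ∫ ω, g ω * f ω ∂μ := integral_condExp hm

lemma secondMomentMatrix_sub_condExp [IsFiniteMeasure μ] {m : MeasurableSpace Ω} (hm : m ≤ mΩ)
    {X Y : Ω → ι → ℝ} (hX : ∀ i, MemLp (fun ω => X ω i) 2 μ)
    (hY : ∀ i, (fun ω => Y ω i) = μ[fun ω => X ω i | m]) :
    secondMomentMatrix μ (X - Y) = secondMomentMatrix μ X - secondMomentMatrix μ Y := by
  have hY2 : ∀ i, MemLp (fun ω => Y ω i) 2 μ := fun i => hY i ▸ (hX i).condExp one_le_two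
  have hmul {f g : Ω → ℝ} (hf : MemLp f 2 μ) (hg : MemLp g 2 μ) :
      Integrable (fun ω => f ω * g ω) μ :=
    hf.integrable_mul hg
  have horth : ∀ i j, ∫ ω, Y ω i * X ω j ∂μ = ∫ ω, Y ω i * Y ω j ∂μ := fun i j => by
    rw [← integral_mul_condExp_of_stronglyMeasurable hm (hY i ▸ stronglyMeasurable_condExp)
      ((hY2 i).integrable_mul (hX j)) ((hX j).integrable one_le_two), ← hY j]
  ext i j
  have hexp : ∀ ω, (X ω i - Y ω i) * (X ω j - Y ω j)
      = (X ω i * X ω j - Y ω i * X ω j) - (Y ω j * X ω i - Y ω j * Y ω i) := fun ω => by ring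
  simp only [secondMomentMatrix_apply, Matrix.sub_apply, Pi.sub_apply, hexp]
  rw [integral_sub ((hmul (hX i) (hX j)).sub' (hmul (hY2 i) (hX j)))
      ((hmul (hY2 j) (hX i)).sub' (hmul (hY2 j) (hY2 i))),
    integral_sub (hmul (hX i) (hX j)) (hmul (hY2 i) (hX j)),
    integral_sub (hmul (hY2 j) (hX i)) (hmul (hY2 j) (hY2 i)), horth, horth]
  simp only [mul_comm (Y _ j)]
  ring

end MeasureTheory

namespace Matrix

lemma trace_sub_mul_transpose_sub {n R : Type*} [Fintype n] [CommRing R] (A B : Matrix n n R) :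
    ((A - B) * (A - B)ᵀ).trace
      = (A * Aᵀ).trace - (B * Bᵀ).trace - 2 * ((A - B) * Bᵀ).trace := by
  have hBA : (B * Aᵀ).trace = (A * Bᵀ).trace := by
    rw [← trace_transpose, transpose_mul, transpose_transpose]
  simp only [transpose_sub, sub_mul, mul_sub, trace_sub, hBA]
  ring

lemma trace_sub_mul_transpose_sub_le {n R : Type*} [Fintype n] [CommRing R] [PartialOrder R]
    [IsOrderedRing R] {A B : Matrix n n R} (h : 0 ≤ ((A - B) * Bᵀ).trace) :
    ((A - B) * (A - B)ᵀ).trace ≤ (A * Aᵀ).trace - (B * Bᵀ).trace := by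
  rw [trace_sub_mul_transpose_sub]
  exact sub_le_self _ (mul_nonneg zero_le_two h)

end Matrix

/-- Covariance loss is bounded by the covariance increment:
`‖E[XX^T] - E[YY^T]‖_F² ≤ ‖E[XX^T]‖_F² - ‖E[YY^T]‖_F²` where `Y = E[X|F]`. -/
theorem stmt4 {Ω : Type*} {mΩ : MeasurableSpace Ω} (μ : Measure Ω) [IsProbabilityMeasure μ]
    {m : MeasurableSpace Ω} (hm : m ≤ mΩ) {d : ℕ}
    (X Y : Ω → Fin d → ℝ) (hX : ∀ i, MemLp (fun ω => X ω i) 2 μ)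
    (hY : ∀ i, (fun ω => Y ω i) = μ[fun ω => X ω i | m]) :
    (((Matrix.of fun i j => ∫ ω, X ω i * X ω j ∂μ) -
        (Matrix.of fun i j => ∫ ω, Y ω i * Y ω j ∂μ)) *
      ((Matrix.of fun i j => ∫ ω, X ω i * X ω j ∂μ) -
        (Matrix.of fun i j => ∫ ω, Y ω i * Y ω j ∂μ))ᵀ).trace
    ≤ ((Matrix.of fun i j => ∫ ω, X ω i * X ω j ∂μ) *
          (Matrix.of fun i j => ∫ ω, X ω i * X ω j ∂μ)ᵀ).trace -
      ((Matrix.of fun i j => ∫ ω, Y ω i * Y ω j ∂μ) *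
          (Matrix.of fun i j => ∫ ω, Y ω i * Y ω j ∂μ)ᵀ).trace := by
  have hY2 : ∀ i, MemLp (fun ω => Y ω i) 2 μ := fun i => hY i ▸ (hX i).condExp one_le_two
  have hcross : 0 ≤ ((secondMomentMatrix μ X - secondMomentMatrix μ Y) *
      (secondMomentMatrix μ Y)ᵀ).trace := by
    rw [← secondMomentMatrix_sub_condExp hm hX hY]
    exact trace_mul_transpose_secondMomentMatrix_nonneg
      (secondMomentMatrix_posSemidef fun i => (hX i).sub (hY2 i)) hY2
  exact trace_sub_mul_transpose_sub_le hcross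
end

section
/- Let X be a square-integrable random vector in R^d, X' an independent copy, Y = E[X|F] and Y' = E[X'|F']. Then ‖E[XX^T]‖_F^2 - ‖E[YY^T]‖_F^2 = E[(⟨X,X'⟩ - ⟨Y,Y'⟩)^2]. -/
/-!
Expanding the square, each of the four terms is an integral of `⟨u, u'⟩ ⟨v, v'⟩` over the
product space, where `(u', v')` is an independent copy of `(u, v)`; by Fubini it factorises into
`∑ i j (E[u_i v_j])² = tr(G Gᵀ)` for the cross-moment matrix `G = E[u vᵀ]`. Since `Y = E[X | F]`
and the components of `X` are in `L²`, the tower property gives `E[X Yᵀ] = E[Y Xᵀ] = E[Y Yᵀ]`,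
so the two mixed terms each equal `‖E[Y Yᵀ]‖_F²`.
-/

open MeasureTheory Matrix

section CrossMoment

variable {Ω ι κ : Type*} {mΩ : MeasurableSpace Ω} {μ : Measure Ω}

noncomputable def crossMoment (μ : Measure Ω) (u : Ω → ι → ℝ) (v : Ω → κ → ℝ) : Matrix ι κ ℝ :=
  Matrix.of fun i j => ∫ ω, u ω i * v ω j ∂μ

theorem trace_mul_transpose_self {R : Type*} [Fintype ι] [Fintype κ] [CommSemiring R]
    (A : Matrix ι κ R) : (A * Aᵀ).trace = ∑ i, ∑ j, A i j ^ 2 := by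
  simp only [trace, diag, mul_apply, transpose_apply, sq]

theorem sum_mul_mul_sum_mul {R : Type*} [Fintype ι] [Fintype κ] [CommSemiring R]
    (a a' : ι → R) (b b' : κ → R) :
    (∑ i, a i * a' i) * (∑ j, b j * b' j) = ∑ i, ∑ j, (a i * b j) * (a' i * b' j) := by
  rw [Finset.sum_mul_sum]
  exact Finset.sum_congr rfl fun i _ => Finset.sum_congr rfl fun j _ => by ring

variable [Fintype ι] [Fintype κ] {u : Ω → ι → ℝ} {v : Ω → κ → ℝ}

theorem integrable_prod_inner_mul_inner
    (hu : ∀ i, MemLp (fun ω => u ω i) 2 μ) (hv : ∀ j, MemLp (fun ω => v ω j) 2 μ) :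
    Integrable (fun p : Ω × Ω => (∑ i, u p.1 i * u p.2 i) * (∑ j, v p.1 j * v p.2 j))
      (μ.prod μ) := by
  simp only [sum_mul_mul_sum_mul]
  have huv : ∀ i j, Integrable (fun ω => u ω i * v ω j) μ := fun i j =>
    (hu i).integrable_mul (hv j)
  exact integrable_finsetSum _ fun i _ => integrable_finsetSum _ fun j _ =>
    (huv i j).mul_prod (huv i j)

theorem integral_prod_inner_mul_inner [SFinite μ]
    (hu : ∀ i, MemLp (fun ω => u ω i) 2 μ) (hv : ∀ j, MemLp (fun ω => v ω j) 2 μ) :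
    ∫ p, (∑ i, u p.1 i * u p.2 i) * (∑ j, v p.1 j * v p.2 j) ∂(μ.prod μ)
      = (crossMoment μ u v * (crossMoment μ u v)ᵀ).trace := by
  have huv : ∀ i j, Integrable (fun ω => u ω i * v ω j) μ := fun i j =>
    (hu i).integrable_mul (hv j)
  simp only [sum_mul_mul_sum_mul, trace_mul_transpose_self]
  rw [integral_finsetSum _ fun i _ => integrable_finsetSum _ fun j _ =>
    (huv i j).mul_prod (huv i j)]
  refine Finset.sum_congr rfl fun i _ => ?_
  rw [integral_finsetSum _ fun j _ => (huv i j).mul_prod (huv i j)]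
  exact Finset.sum_congr rfl fun j _ => by
    rw [integral_prod_mul (fun ω => u ω i * v ω j) (fun ω => u ω i * v ω j), sq]; rfl

theorem integral_prod_sub_inner_sq [SFinite μ] {w : Ω → ι → ℝ}
    (hu : ∀ i, MemLp (fun ω => u ω i) 2 μ) (hw : ∀ i, MemLp (fun ω => w ω i) 2 μ) :
    ∫ p, ((∑ i, u p.1 i * u p.2 i) - ∑ i, w p.1 i * w p.2 i) ^ 2 ∂(μ.prod μ)
      = (crossMoment μ u u * (crossMoment μ u u)ᵀ).trace
        - (crossMoment μ u w * (crossMoment μ u w)ᵀ).trace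
        - ((crossMoment μ w u * (crossMoment μ w u)ᵀ).trace
          - (crossMoment μ w w * (crossMoment μ w w)ᵀ).trace) := by
  let a (p : Ω × Ω) := ∑ i, u p.1 i * u p.2 i
  let b (p : Ω × Ω) := ∑ i, w p.1 i * w p.2 i
  have hab : Integrable (fun p => a p * b p) (μ.prod μ) := integrable_prod_inner_mul_inner hu hw
  have hba : Integrable (fun p => b p * a p) (μ.prod μ) := integrable_prod_inner_mul_inner hw hu
  have haa : Integrable (fun p => a p * a p) (μ.prod μ) := integrable_prod_inner_mul_inner hu hu
  have hbb : Integrable (fun p => b p * b p) (μ.prod μ) := integrable_prod_inner_mul_inner hw hw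
  have hA : Integrable (fun p => a p * a p - a p * b p) (μ.prod μ) := haa.sub hab
  have hB : Integrable (fun p => b p * a p - b p * b p) (μ.prod μ) := hba.sub hbb
  calc ∫ p, (a p - b p) ^ 2 ∂(μ.prod μ)
      = ∫ p, (a p * a p - a p * b p) - (b p * a p - b p * b p) ∂(μ.prod μ) :=
        integral_congr_ae <| .of_forall fun p => by ring
    _ = _ := by
      rw [integral_sub hA hB, integral_sub haa hab, integral_sub hba hbb,
        integral_prod_inner_mul_inner hu hu, integral_prod_inner_mul_inner hu hw,
        integral_prod_inner_mul_inner hw hu, integral_prod_inner_mul_inner hw hw]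

end CrossMoment

section Tower

variable {Ω : Type*} {m mΩ : MeasurableSpace Ω} {μ : Measure Ω} [IsFiniteMeasure μ]

theorem integral_condExp_mul_of_memLp (hm : m ≤ mΩ) {f g : Ω → ℝ}
    (hf : MemLp f 2 μ) (hg : MemLp g 2 μ) :
    ∫ ω, (μ[f | m]) ω * g ω ∂μ = ∫ ω, (μ[f | m]) ω * (μ[g | m]) ω ∂μ := by
  have hfg : Integrable (μ[f | m] * g) μ := (hf.condExp one_le_two).integrable_mul hg
  calc ∫ ω, (μ[f | m] * g) ω ∂μ = ∫ ω, (μ[μ[f | m] * g | m]) ω ∂μ := (integral_condExp hm).symm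
    _ = ∫ ω, (μ[f | m] * μ[g | m]) ω ∂μ :=
      integral_congr_ae <| condExp_mul_of_stronglyMeasurable_left stronglyMeasurable_condExp hfg
        (hg.integrable one_le_two)

variable {ι κ : Type*} {X Y : Ω → ι → ℝ} {X' Y' : Ω → κ → ℝ}

theorem crossMoment_condExp_left (hm : m ≤ mΩ) (hX : ∀ i, MemLp (fun ω => X ω i) 2 μ)
    (hX' : ∀ j, MemLp (fun ω => X' ω j) 2 μ)
    (hY : ∀ i, (fun ω => Y ω i) = μ[fun ω => X ω i | m])
    (hY' : ∀ j, (fun ω => Y' ω j) = μ[fun ω => X' ω j | m]) :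
    crossMoment μ Y X' = crossMoment μ Y Y' := by
  ext i j
  have := integral_condExp_mul_of_memLp hm (hX i) (hX' j)
  rwa [← hY i, ← hY' j] at this

theorem crossMoment_condExp_right (hm : m ≤ mΩ) (hX : ∀ i, MemLp (fun ω => X ω i) 2 μ)
    (hX' : ∀ j, MemLp (fun ω => X' ω j) 2 μ)
    (hY : ∀ i, (fun ω => Y ω i) = μ[fun ω => X ω i | m])
    (hY' : ∀ j, (fun ω => Y' ω j) = μ[fun ω => X' ω j | m]) :
    crossMoment μ X Y' = crossMoment μ Y Y' := by
  ext i j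
  simpa only [crossMoment, of_apply, mul_comm] using
    congrFun₂ (crossMoment_condExp_left hm hX' hX hY' hY) j i

end Tower

/-- Representation of the covariance increment:
`‖E[XX^T]‖_F² - ‖E[YY^T]‖_F² = E (⟨X,X'⟩ - ⟨Y,Y'⟩)²`, where `Y = E[X|F]` and
`(X',Y')` is an independent copy realized on the product space. -/
theorem stmt6 {Ω : Type*} {mΩ : MeasurableSpace Ω} (μ : Measure Ω) [IsProbabilityMeasure μ]
    (m : MeasurableSpace Ω) (hm : m ≤ mΩ) {d : ℕ}
    (X Y : Ω → Fin d → ℝ) (hX : ∀ i, MemLp (fun ω => X ω i) 2 μ)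
    (hY : ∀ i, (fun ω => Y ω i) = μ[fun ω => X ω i | m]) :
    ((Matrix.of fun i j => ∫ ω, X ω i * X ω j ∂μ) *
        (Matrix.of fun i j => ∫ ω, X ω i * X ω j ∂μ)ᵀ).trace -
    ((Matrix.of fun i j => ∫ ω, Y ω i * Y ω j ∂μ) *
        (Matrix.of fun i j => ∫ ω, Y ω i * Y ω j ∂μ)ᵀ).trace
      = ∫ p, ((∑ i, X p.1 i * X p.2 i) - ∑ i, Y p.1 i * Y p.2 i) ^ 2
          ∂(@Measure.prod Ω Ω mΩ mΩ μ μ) := by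
  have hY₂ i : MemLp (fun ω => Y ω i) 2 μ := hY i ▸ (hX i).condExp one_le_two
  rw [integral_prod_sub_inner_sq hX hY₂, crossMoment_condExp_right hm hX hX hY hY,
    crossMoment_condExp_left hm hX hX hY hY]
  unfold crossMoment
  ring
end

section
/- Let A be an n×n Hadamard matrix and [n] = I_1 ∪ ... ∪ I_k any partition. Then for any matrix B that is constant on each block I_i × I_j, (1/n)‖A - B‖_F ≥ (1/2)·√(1 - k/n). -/
open Real Matrix

lemma colsum_sq {n : ℕ} (A : Matrix (Fin n) (Fin n) ℝ)
    (horth : Aᵀ * A = (n : ℝ) • 1) (F : Finset (Fin n)) :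
    ∑ i, (∑ j ∈ F, A i j) ^ 2 = (F.card : ℝ) * n := by
  have h : ∀ j j' : Fin n, ∑ i, A i j * A i j' = if j = j' then (n : ℝ) else 0 := by
    intro j j'
    have := congrFun (congrFun horth j) j'
    simpa [Matrix.mul_apply, Matrix.transpose_apply, Matrix.one_apply, Matrix.smul_apply,
      mul_comm] using this
  calc ∑ i, (∑ j ∈ F, A i j) ^ 2
      = ∑ i, ∑ j ∈ F, ∑ j' ∈ F, A i j * A i j' := by
        simp [sq, Finset.sum_mul_sum]
    _ = ∑ j ∈ F, ∑ i, ∑ j' ∈ F, A i j * A i j' := Finset.sum_comm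
    _ = ∑ j ∈ F, ∑ j' ∈ F, ∑ i, A i j * A i j' := by
        exact Finset.sum_congr rfl fun j _ => Finset.sum_comm
    _ = ∑ j ∈ F, ∑ j' ∈ F, if j = j' then (n : ℝ) else 0 := by
        simp [h]
    _ = (F.card : ℝ) * n := by
        have hrow : ∀ j ∈ F, (∑ j' ∈ F, if j = j' then (n : ℝ) else 0) = (n : ℝ) := by
          intro j hj
          rw [Finset.sum_ite_eq F j (fun _ => (n : ℝ))]
          simp [hj]
        rw [Finset.sum_congr rfl hrow, Finset.sum_const, nsmul_eq_mul]

lemma class_bound {n : ℕ} (A : Matrix (Fin n) (Fin n) ℝ)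
    (hentries : ∀ i j, A i j = 1 ∨ A i j = -1)
    (horth : Aᵀ * A = (n : ℝ) • 1)
    (F : Finset (Fin n)) (b : Fin n → ℝ) :
    (n : ℝ) * ((F.card : ℝ) - 1) ≤ ∑ j ∈ F, ∑ i, (A i j - b i) ^ 2 := by
  rcases F.eq_empty_or_nonempty with rfl | hF
  · simp only [Finset.card_empty, Nat.cast_zero, Finset.sum_empty, zero_sub]
    nlinarith [Nat.cast_nonneg (α := ℝ) n]
  · set m : ℝ := (F.card : ℝ) with hm0
    have hm : 1 ≤ m := by rw [hm0]; exact_mod_cast hF.card_pos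
    set s : Fin n → ℝ := fun i => ∑ j ∈ F, A i j with hs
    have h1 : ∑ i, ∑ j ∈ F, (A i j) ^ 2 = m * n := by
      rw [Finset.sum_comm]
      have hj : ∀ j : Fin n, ∑ i, (A i j) ^ 2 = (n : ℝ) := by
        intro j
        have : ∀ i, (A i j) ^ 2 = 1 := fun i => by rcases hentries i j with h | h <;> simp [h]
        simp [this]
      simp [hj, hm0, mul_comm]
    have h2 : ∑ i, (s i) ^ 2 = m * n := colsum_sq A horth F
    have h3 : ∑ j ∈ F, ∑ i, (A i j - b i) ^ 2
        = (∑ i, ∑ j ∈ F, (A i j) ^ 2) - 2 * (∑ i, b i * s i) + m * ∑ i, (b i) ^ 2 := by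
      rw [Finset.sum_comm]
      have hper : ∀ i : Fin n, ∑ j ∈ F, (A i j - b i) ^ 2
          = (∑ j ∈ F, (A i j) ^ 2) - 2 * (b i * s i) + m * (b i) ^ 2 := by
        intro i
        have hexp : ∀ j ∈ F, (A i j - b i) ^ 2
            = (A i j) ^ 2 - 2 * b i * A i j + (b i) ^ 2 := fun j _ => by ring
        rw [Finset.sum_congr rfl hexp, Finset.sum_add_distrib, Finset.sum_sub_distrib,
          Finset.sum_const, nsmul_eq_mul, ← Finset.mul_sum]
        simp only [hs, hm0]
        ring
      rw [Finset.sum_congr rfl fun i _ => hper i, Finset.sum_add_distrib,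
        Finset.sum_sub_distrib, ← Finset.mul_sum, ← Finset.mul_sum]
    have h4 : 0 ≤ ∑ i, (m * b i - s i) ^ 2 := Finset.sum_nonneg fun i _ => sq_nonneg _
    have h5 : ∑ i, (m * b i - s i) ^ 2
        = m ^ 2 * (∑ i, (b i) ^ 2) - 2 * m * (∑ i, b i * s i) + ∑ i, (s i) ^ 2 := by
      rw [Finset.mul_sum, Finset.mul_sum, ← Finset.sum_sub_distrib, ← Finset.sum_add_distrib]
      exact Finset.sum_congr rfl fun i _ => by ring
    rw [h3, h1]
    set p := ∑ i, b i * s i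
    set q := ∑ i, (b i) ^ 2
    rw [h5, h2] at h4
    have hq : 0 ≤ q := Finset.sum_nonneg fun i _ => sq_nonneg _
    nlinarith [sq_nonneg m, mul_le_mul_of_nonneg_left h4 (le_of_lt (lt_of_lt_of_le one_pos hm))]

/-- Positive semidefiniteness is essential: if `A` is an `n×n` Hadamard matrix
(entries `±1`, pairwise orthogonal columns) and `B` is constant on each block of a
partition of `[n]` into `k` parts, then `(1/n)‖A - B‖_F ≥ (1/2)√(1 - k/n)`. -/
theorem stmt16 {n : ℕ} (hn : 0 < n) (A : Matrix (Fin n) (Fin n) ℝ)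
    (hentries : ∀ i j, A i j = 1 ∨ A i j = -1)
    (horth : Aᵀ * A = (n : ℝ) • 1)
    {k : ℕ} (c : Fin n → Fin k) (B : Matrix (Fin n) (Fin n) ℝ)
    (hB : ∀ i j i' j', c i = c i' → c j = c j' → B i j = B i' j') :
    (1 / 2) * Real.sqrt (1 - (k : ℝ) / n)
      ≤ (1 / n) * Real.sqrt (∑ i, ∑ j, (A i j - B i j) ^ 2) := by
  have hn' : (0 : ℝ) < n := by exact_mod_cast hn
  set S := ∑ i, ∑ j, (A i j - B i j) ^ 2 with hS
  have hSnn : 0 ≤ S := Finset.sum_nonneg fun i _ => Finset.sum_nonneg fun j _ => sq_nonneg _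
  have key : (n : ℝ) * ((n : ℝ) - (k : ℝ)) ≤ S := by
    have hswap : S = ∑ j, ∑ i, (A i j - B i j) ^ 2 := Finset.sum_comm
    have hfib : S = ∑ t : Fin k, ∑ j ∈ Finset.univ.filter (fun j => c j = t),
        ∑ i, (A i j - B i j) ^ 2 := by
      rw [hswap, ← Finset.sum_fiberwise Finset.univ c (fun j => ∑ i, (A i j - B i j) ^ 2)]
    have hcard : ∑ t : Fin k, ((Finset.univ.filter (fun j => c j = t)).card : ℝ) = n := by
      have := Finset.card_eq_sum_card_fiberwise (f := c) (s := (Finset.univ : Finset (Fin n)))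
        (t := Finset.univ) (fun x _ => Finset.mem_univ _)
      have h2 : ((Finset.univ : Finset (Fin n)).card : ℝ) = ∑ t : Fin k,
          ((Finset.univ.filter (fun j => c j = t)).card : ℝ) := by
        exact_mod_cast congrArg (Nat.cast (R := ℝ)) this
      simpa using h2.symm
    have hbound : ∀ t : Fin k,
        (n : ℝ) * (((Finset.univ.filter (fun j => c j = t)).card : ℝ) - 1)
          ≤ ∑ j ∈ Finset.univ.filter (fun j => c j = t), ∑ i, (A i j - B i j) ^ 2 := by
      intro t
      set F := Finset.univ.filter (fun j => c j = t) with hF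
      rcases F.eq_empty_or_nonempty with hFe | hFne
      · rw [hFe]
        simp only [Finset.card_empty, Nat.cast_zero, Finset.sum_empty, zero_sub]
        nlinarith [Nat.cast_nonneg (α := ℝ) n]
      · obtain ⟨j0, hj0⟩ := hFne
        have hrw : ∑ j ∈ F, ∑ i, (A i j - B i j) ^ 2
            = ∑ j ∈ F, ∑ i, (A i j - B i j0) ^ 2 := by
          refine Finset.sum_congr rfl fun j hj => Finset.sum_congr rfl fun i _ => ?_
          have hcj : c j = c j0 := by
            rw [hF, Finset.mem_filter] at hj
            rw [hF, Finset.mem_filter] at hj0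
            rw [hj.2, hj0.2]
          rw [hB i j i j0 rfl hcj]
        rw [hrw]
        exact class_bound A hentries horth F (fun i => B i j0)
    have hsum : ∑ t : Fin k, (((Finset.univ.filter (fun j => c j = t)).card : ℝ) - 1)
        = (n : ℝ) - k := by
      rw [Finset.sum_sub_distrib, hcard]
      simp
    calc (n : ℝ) * ((n : ℝ) - (k : ℝ))
        = ∑ t : Fin k, (n : ℝ) * (((Finset.univ.filter (fun j => c j = t)).card : ℝ) - 1) := by
          rw [← Finset.mul_sum, hsum]
      _ ≤ ∑ t : Fin k, ∑ j ∈ Finset.univ.filter (fun j => c j = t),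
            ∑ i, (A i j - B i j) ^ 2 := Finset.sum_le_sum fun t _ => hbound t
      _ = S := hfib.symm
  rcases le_or_gt (1 - (k : ℝ) / n) 0 with h | h
  · rw [Real.sqrt_eq_zero'.mpr h]
    have : 0 ≤ (1 / (n : ℝ)) * Real.sqrt S := by positivity
    linarith
  · have hSge : (n : ℝ) ^ 2 * (1 - (k : ℝ) / n) ≤ S := by
      have heq : (n : ℝ) ^ 2 * (1 - (k : ℝ) / n) = (n : ℝ) * ((n : ℝ) - (k : ℝ)) := by
        field_simp
      rw [heq]; exact key
    have h1 : Real.sqrt ((n : ℝ) ^ 2 * (1 - (k : ℝ) / n)) ≤ Real.sqrt S :=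
      Real.sqrt_le_sqrt hSge
    rw [Real.sqrt_mul (by positivity), Real.sqrt_sq hn'.le] at h1
    have h2 : (1 / 2) * Real.sqrt (1 - (k : ℝ) / n) ≤ Real.sqrt (1 - (k : ℝ) / n) := by
      nlinarith [Real.sqrt_nonneg (1 - (k : ℝ) / n)]
    refine h2.trans ?_
    rw [one_div, inv_mul_eq_div, le_div_iff₀ hn']
    linarith [h1, mul_comm (n : ℝ) (Real.sqrt (1 - (k : ℝ) / n))]
end
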